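/- arXiv:math/0007133 — 7 statements merged into one kernel-verified Lean document; each statement's English description precedes it below -/
import Mathlib

section
/- If f belongs to S*(A,B,b), then for every z ∈ D \ {0} with |z| = r one has | z·f′(z)/f(z) − (1 − (B² + b·(A·B − B²))·r²)/(1 − B²·r²) | ≤ |b|·(A − B)·r/(1 − B²·r²), where the center is a complex number and the absolute value is the complex modulus. (Lemma 2.1; the paper's displayed center has a sign misprint, the correct center being (1 − [B² + b(AB − B²)]r²)/(1 − B²r²).) -/
/-!
By the Schwarz lemma `‖ω z‖ ≤ ‖z‖ = r`, so it suffices to locate the image of the closed disc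
`‖w‖ ≤ r` under `w ↦ 1 + b ((1 + A w) / (1 + B w) - 1)`. Subtracting the centre leaves
`b (A - B) (w + B r²) / ((1 + B w) (1 - B² r²))`, and the Möbius factor obeys
`‖w + B r²‖ ≤ r ‖1 + B w‖` because
`‖w + B r²‖² - r² ‖1 + B w‖² = (‖w‖² - r²) (1 - B² r²)`.
-/

open Complex Metric Set

lemma sq_norm_add_mul_sub_sq_mul_sq_norm (B r : ℝ) (w : ℂ) :
    ‖w + (B : ℂ) * (r : ℂ) ^ 2‖ ^ 2 - (r * ‖1 + (B : ℂ) * w‖) ^ 2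
      = (‖w‖ ^ 2 - r ^ 2) * (1 - B ^ 2 * r ^ 2) := by
  simp only [mul_pow, Complex.sq_norm, Complex.normSq_apply, Complex.add_re, Complex.add_im,
    Complex.mul_re, Complex.mul_im, ← Complex.ofReal_pow, Complex.ofReal_re, Complex.ofReal_im,
    Complex.one_re, Complex.one_im]
  ring

lemma norm_add_mul_sq_le_mul_norm_one_add_mul {B r : ℝ} {w : ℂ} (hw : ‖w‖ ≤ r)
    (hBr : B ^ 2 * r ^ 2 ≤ 1) :
    ‖w + (B : ℂ) * (r : ℂ) ^ 2‖ ≤ r * ‖1 + (B : ℂ) * w‖ := by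
  have hr : 0 ≤ r := (norm_nonneg w).trans hw
  have hsq : ‖w‖ ^ 2 - r ^ 2 ≤ 0 := by
    linarith [pow_le_pow_left₀ (norm_nonneg w) hw 2]
  rw [← pow_le_pow_iff_left₀ (norm_nonneg _) (by positivity) two_ne_zero, ← sub_nonpos,
    sq_norm_add_mul_sub_sq_mul_sq_norm]
  exact mul_nonpos_of_nonpos_of_nonneg hsq (sub_nonneg.2 hBr)

lemma one_add_mul_sub_center_eq (a β b w s : ℂ) (hw : 1 + β * w ≠ 0)
    (hs : 1 - β ^ 2 * s ≠ 0) :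
    1 + b * ((1 + a * w) / (1 + β * w) - 1) -
        (1 - (β ^ 2 + b * (a * β - β ^ 2)) * s) / (1 - β ^ 2 * s) =
      b * (a - β) * (w + β * s) / ((1 + β * w) * (1 - β ^ 2 * s)) := by
  rw [mul_comm β w] at hw ⊢
  field_simp
  ring

lemma norm_one_add_mul_sub_center_le {A B r : ℝ} {b w : ℂ} (hB : |B| ≤ 1) (hBA : B ≤ A)
    (hw : ‖w‖ ≤ r) (hr : r < 1) :
    ‖1 + b * ((1 + (A : ℂ) * w) / (1 + (B : ℂ) * w) - 1) -
        (1 - ((B : ℂ) ^ 2 + b * ((A : ℂ) * B - (B : ℂ) ^ 2)) * (r : ℂ) ^ 2) /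
          (1 - (B : ℂ) ^ 2 * (r : ℂ) ^ 2)‖
      ≤ ‖b‖ * (A - B) * r / (1 - B ^ 2 * r ^ 2) := by
  have hr0 : 0 ≤ r := (norm_nonneg w).trans hw
  have hBr : B ^ 2 * r ^ 2 < 1 := by
    have hB2 : B ^ 2 ≤ 1 := (sq_le_one_iff_abs_le_one B).2 hB
    nlinarith
  have hBw : ‖(B : ℂ) * w‖ < 1 := by
    rw [norm_mul, Complex.norm_real, Real.norm_eq_abs]
    nlinarith [norm_nonneg w, abs_nonneg B]
  have hBw_pos : 0 < ‖1 + (B : ℂ) * w‖ := by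
    have := norm_sub_norm_le (1 : ℂ) (-((B : ℂ) * w))
    rw [norm_one, norm_neg, sub_neg_eq_add] at this
    linarith
  have hden : (1 : ℂ) - (B : ℂ) ^ 2 * (r : ℂ) ^ 2 = ((1 - B ^ 2 * r ^ 2 : ℝ) : ℂ) := by
    push_cast; ring
  have hAB : (A : ℂ) - B = ((A - B : ℝ) : ℂ) := by push_cast; ring
  rw [one_add_mul_sub_center_eq _ _ _ _ _ (norm_pos_iff.1 hBw_pos)
      (hden ▸ Complex.ofReal_ne_zero.2 (sub_pos.2 hBr).ne'),
    hden, hAB, norm_div, norm_mul, norm_mul, norm_mul, Complex.norm_real, Complex.norm_real,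
    Real.norm_of_nonneg (sub_nonneg.2 hBA), Real.norm_of_nonneg (sub_pos.2 hBr).le]
  have hmob := norm_add_mul_sq_le_mul_norm_one_add_mul hw hBr.le
  rw [div_le_div_iff₀ (mul_pos hBw_pos (sub_pos.2 hBr)) (sub_pos.2 hBr)]
  have hbAB : 0 ≤ ‖b‖ * (A - B) := mul_nonneg (norm_nonneg b) (sub_nonneg.2 hBA)
  calc ‖b‖ * (A - B) * ‖w + (B : ℂ) * (r : ℂ) ^ 2‖ * (1 - B ^ 2 * r ^ 2)
      ≤ ‖b‖ * (A - B) * (r * ‖1 + (B : ℂ) * w‖) * (1 - B ^ 2 * r ^ 2) := by gcongr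
    _ = ‖b‖ * (A - B) * r * (‖1 + (B : ℂ) * w‖ * (1 - B ^ 2 * r ^ 2)) := by ring

theorem stmt0_general (A B : ℝ) (hB : -1 ≤ B) (hBA : B < A) (hA : A ≤ 1)
    (b : ℂ) (hb : b ≠ 0) (f : ℂ → ℂ)
    (ω : ℂ → ℂ) (hω : AnalyticOn ℂ ω (ball 0 1))
    (hω0 : ω 0 = 0) (hωlt : ∀ z ∈ ball (0:ℂ) 1, ‖ω z‖ < 1)
    (hmem : ∀ z ∈ ball (0:ℂ) 1, z ≠ 0 →
      1 + (1/b) * (z * deriv f z / f z - 1) = (1 + (A:ℂ) * ω z) / (1 + (B:ℂ) * ω z))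
    (z : ℂ) (hz : z ∈ ball (0:ℂ) 1) (hz0 : z ≠ 0)
    (r : ℝ) (hr : ‖z‖ = r) :
    ‖z * deriv f z / f z -
        (1 - ((B:ℂ)^2 + b * ((A:ℂ) * B - (B:ℂ)^2)) * (r:ℂ)^2) / (1 - (B:ℂ)^2 * (r:ℂ)^2)‖
      ≤ ‖b‖ * (A - B) * r / (1 - B^2 * r^2) := by
  have hz1 : ‖z‖ < 1 := mem_ball_zero_iff.1 hz
  have hschwarz : ‖ω z‖ ≤ ‖z‖ :=
    Complex.norm_le_norm_of_mapsTo_ball hω.differentiableOn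
      (fun x hx ↦ mem_closedBall_zero_iff.2 (hωlt x hx).le) hω0 hz1
  have hlog : z * deriv f z / f z = 1 + b * ((1 + (A:ℂ) * ω z) / (1 + (B:ℂ) * ω z) - 1) := by
    rw [← hmem z hz hz0]
    field_simp
    ring
  rw [hlog]
  subst hr
  exact norm_one_add_mul_sub_center_le (abs_le.2 ⟨hB, hBA.le.trans hA⟩) hBA.le hschwarz hz1

theorem stmt0 (A B : ℝ) (hB : -1 ≤ B) (hBA : B < A) (hA : A ≤ 1)
    (b : ℂ) (hb : b ≠ 0) (f : ℂ → ℂ)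
    (hf : AnalyticOn ℂ f (ball 0 1))
    (hf0 : f 0 = 0) (hf'0 : deriv f 0 = 1)
    (hfne : ∀ z ∈ ball (0:ℂ) 1, z ≠ 0 → f z ≠ 0)
    (ω : ℂ → ℂ) (hω : AnalyticOn ℂ ω (ball 0 1))
    (hω0 : ω 0 = 0) (hωlt : ∀ z ∈ ball (0:ℂ) 1, ‖ω z‖ < 1)
    (hmem : ∀ z ∈ ball (0:ℂ) 1, z ≠ 0 →
      1 + (1/b) * (z * deriv f z / f z - 1) = (1 + (A:ℂ) * ω z) / (1 + (B:ℂ) * ω z))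
    (z : ℂ) (hz : z ∈ ball (0:ℂ) 1) (hz0 : z ≠ 0)
    (r : ℝ) (hr : ‖z‖ = r) :
    ‖z * deriv f z / f z -
        (1 - ((B:ℂ)^2 + b * ((A:ℂ) * B - (B:ℂ)^2)) * (r:ℂ)^2) / (1 - (B:ℂ)^2 * (r:ℂ)^2)‖
      ≤ ‖b‖ * (A - B) * r / (1 - B^2 * r^2) :=
  stmt0_general A B hB hBA hA b hb f ω hω hω0 hωlt hmem z hz hz0 r hr
end

section
/- If f belongs to S*(A,B,b), then for every z ∈ D \ {0} with |z| = r one has Re( z·f′(z)/f(z) ) ≥ ( 1 − |b|·(A − B)·r − (B² + (A·B − B²)·Re b)·r² ) / (1 − B²·r²). (Inequality (2.3) in the proof of Theorem 2.1.) -/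
/-!
Write `p = z f'(z)/f(z)` and `w = ω(z)`. Solving the defining relation gives
`p = 1 + (A - B) b w / (1 + B w)`. The Möbius map `w ↦ w / (1 + B w)` sends the circle `‖w‖ = ρ` onto
the circle with centre `-Bρ²/(1 - B²ρ²)` and radius `ρ/(1 - B²ρ²)`, which bounds `Re (b w/(1 + B w))`
from below by `-(‖b‖ρ + B Re b ρ²)/(1 - B²ρ²)`. This bound decreases in `ρ`, and Schwarz's lemma
gives `ρ ≤ r`.
-/

open Complex ComplexConjugate Metric Set

lemma sq_mul_sq_lt_one {B ρ : ℝ} (hρ : 0 ≤ ρ) (h : |B| * ρ < 1) : B ^ 2 * ρ ^ 2 < 1 := by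
  rw [← sq_abs, ← mul_pow]
  exact pow_lt_one₀ (by positivity) h two_ne_zero

lemma one_add_ofReal_mul_ne_zero {B : ℝ} {w : ℂ} (h : B ^ 2 * ‖w‖ ^ 2 < 1) :
    1 + (B : ℂ) * w ≠ 0 := by
  intro h0
  have h1 : ‖(B : ℂ) * w‖ = 1 := by
    rw [show (B : ℂ) * w = -1 by linear_combination h0, norm_neg, norm_one]
  rw [norm_mul, Complex.norm_real, Real.norm_eq_abs] at h1
  nlinarith [sq_abs B]

lemma norm_div_one_add_ofReal_mul_add_center {B : ℝ} {w : ℂ} (h : B ^ 2 * ‖w‖ ^ 2 < 1) :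
    ‖w / (1 + B * w) + ((B * ‖w‖ ^ 2 / (1 - B ^ 2 * ‖w‖ ^ 2) : ℝ) : ℂ)‖
      = ‖w‖ / (1 - B ^ 2 * ‖w‖ ^ 2) := by
  have hden := one_add_ofReal_mul_ne_zero h
  have hD : 0 < 1 - B ^ 2 * ‖w‖ ^ 2 := by linarith
  have hDc : (1 : ℂ) - (B : ℂ) ^ 2 * (‖w‖ : ℂ) ^ 2 ≠ 0 := by exact_mod_cast hD.ne'
  have hww : ((‖w‖ : ℂ)) ^ 2 = w * conj w := by rw [mul_conj, normSq_eq_norm_sq]; push_cast; rfl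
  have hden' : 1 + w * B ≠ 0 := by rwa [mul_comm]
  have hsum : w / (1 + B * w) + ((B * ‖w‖ ^ 2 / (1 - B ^ 2 * ‖w‖ ^ 2) : ℝ) : ℂ)
      = w * conj (1 + B * w) / ((1 + B * w) * ((1 - B ^ 2 * ‖w‖ ^ 2 : ℝ) : ℂ)) := by
    push_cast
    rw [map_add, map_one, map_mul, conj_ofReal]
    field_simp
    linear_combination (B : ℂ) * hww
  rw [hsum, norm_div, norm_mul, norm_mul, Complex.norm_conj, Complex.norm_real, Real.norm_eq_abs,
    abs_of_pos hD]
  have : ‖1 + (B : ℂ) * w‖ ≠ 0 := norm_ne_zero_iff.mpr hden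
  field_simp

lemma neg_div_le_re_mul_div_one_add_ofReal_mul {B : ℝ} (b : ℂ) {w : ℂ}
    (h : B ^ 2 * ‖w‖ ^ 2 < 1) :
    -(‖b‖ * ‖w‖ + B * b.re * ‖w‖ ^ 2) / (1 - B ^ 2 * ‖w‖ ^ 2) ≤ (b * (w / (1 + B * w))).re := by
  set c : ℝ := B * ‖w‖ ^ 2 / (1 - B ^ 2 * ‖w‖ ^ 2)
  have hD : 0 < 1 - B ^ 2 * ‖w‖ ^ 2 := by linarith
  have hsplit : (b * (w / (1 + B * w))).re = (b * (w / (1 + B * w) + c)).re - b.re * c := by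
    rw [mul_add, add_re, re_mul_ofReal]; ring
  have hnorm : ‖b * (w / (1 + B * w) + c)‖ = ‖b‖ * (‖w‖ / (1 - B ^ 2 * ‖w‖ ^ 2)) := by
    rw [norm_mul, norm_div_one_add_ofReal_mul_add_center h]
  have hre := neg_le_of_abs_le (abs_re_le_norm (b * (w / (1 + B * w) + c)))
  have hlhs : -(‖b‖ * ‖w‖ + B * b.re * ‖w‖ ^ 2) / (1 - B ^ 2 * ‖w‖ ^ 2)
      = -(‖b‖ * (‖w‖ / (1 - B ^ 2 * ‖w‖ ^ 2))) - b.re * c := by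
    field_simp; ring
  rw [hsplit, hlhs]
  linarith

lemma neg_div_one_sub_sq_mul_sq_le_of_le {a β B ρ r : ℝ} (hβ : |β| ≤ a) (hρ : 0 ≤ ρ) (hρr : ρ ≤ r)
    (hBr : |B| * r < 1) :
    -(a * r + B * β * r ^ 2) / (1 - B ^ 2 * r ^ 2)
      ≤ -(a * ρ + B * β * ρ ^ 2) / (1 - B ^ 2 * ρ ^ 2) := by
  have hBρ : |B| * ρ < 1 := lt_of_le_of_lt (mul_le_mul_of_nonneg_left hρr (abs_nonneg B)) hBr
  have hDρ : 0 < 1 - B ^ 2 * ρ ^ 2 := by linarith [sq_mul_sq_lt_one hρ hBρ]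
  have hDr : 0 < 1 - B ^ 2 * r ^ 2 := by linarith [sq_mul_sq_lt_one (hρ.trans hρr) hBr]
  have hBβ : -(|B| * a) ≤ B * β := by
    have : |B * β| ≤ |B| * a := by
      rw [abs_mul]; exact mul_le_mul_of_nonneg_left hβ (abs_nonneg B)
    linarith [neg_abs_le (B * β)]
  rw [neg_div, neg_div, neg_le_neg_iff, div_le_div_iff₀ hDρ hDr]
  -- The difference of the cross products is `(r - ρ) (a (1 + B²ρr) + Bβ (r + ρ))`,
  -- which is at least `a (r - ρ)(1 - |B|ρ)(1 - |B|r)`.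
  have hfactor : 0 ≤ a * (r - ρ) * (1 - |B| * (ρ + r) + B ^ 2 * (ρ * r)) := by
    have e : 1 - |B| * (ρ + r) + B ^ 2 * (ρ * r) = (1 - |B| * ρ) * (1 - |B| * r) := by
      rw [← sq_abs B]; ring
    rw [e]
    exact mul_nonneg (mul_nonneg ((abs_nonneg β).trans hβ) (by linarith))
      (mul_nonneg (by linarith) (by linarith))
  have hcross : 0 ≤ (r - ρ) * (r + ρ) * (B * β + |B| * a) :=
    mul_nonneg (mul_nonneg (by linarith) (by linarith)) (by linarith)
  nlinarith [hfactor, hcross]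

lemma eq_one_add_sub_mul_of_one_add_div_eq {A B b p w : ℂ} (hb : b ≠ 0) (hden : 1 + B * w ≠ 0)
    (h : 1 + (1 / b) * (p - 1) = (1 + A * w) / (1 + B * w)) :
    p = 1 + (A - B) * (b * (w / (1 + B * w))) := by
  rw [mul_comm] at hden
  field_simp at h ⊢
  linear_combination h

theorem stmt1_general (A B : ℝ) (hB : -1 ≤ B) (hBA : B < A) (hA : A ≤ 1)
    (b : ℂ) (hb : b ≠ 0) (f : ℂ → ℂ)
    (ω : ℂ → ℂ) (hω : AnalyticOn ℂ ω (ball 0 1))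
    (hω0 : ω 0 = 0) (hωlt : ∀ z ∈ ball (0:ℂ) 1, ‖ω z‖ < 1)
    (hmem : ∀ z ∈ ball (0:ℂ) 1, z ≠ 0 →
      1 + (1/b) * (z * deriv f z / f z - 1) = (1 + (A:ℂ) * ω z) / (1 + (B:ℂ) * ω z))
    (z : ℂ) (hz : z ∈ ball (0:ℂ) 1) (hz0 : z ≠ 0)
    (r : ℝ) (hr : ‖z‖ = r) :
    (1 - ‖b‖ * (A - B) * r - (B^2 + (A * B - B^2) * b.re) * r^2) / (1 - B^2 * r^2)
      ≤ (z * deriv f z / f z).re := by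
  have hz1 : ‖z‖ < 1 := mem_ball_zero_iff.mp hz
  have hBabs : |B| ≤ 1 := abs_le.2 ⟨hB, by linarith⟩
  have hBr : |B| * r < 1 := by nlinarith [abs_nonneg B, norm_nonneg z]
  have hschwarz : ‖ω z‖ ≤ r := hr ▸ Complex.norm_le_norm_of_mapsTo_ball hω.differentiableOn
    (fun x hx => ball_subset_closedBall (mem_ball_zero_iff.2 (hωlt x hx))) hω0 hz1
  have hBw : B ^ 2 * ‖ω z‖ ^ 2 < 1 := sq_mul_sq_lt_one (norm_nonneg _)
    ((mul_le_mul_of_nonneg_left hschwarz (abs_nonneg B)).trans_lt hBr)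
  have hp := eq_one_add_sub_mul_of_one_add_div_eq hb (one_add_ofReal_mul_ne_zero hBw)
    (hmem z hz hz0)
  have hlow := (neg_div_one_sub_sq_mul_sq_le_of_le (abs_re_le_norm b) (norm_nonneg _) hschwarz
    hBr).trans (neg_div_le_re_mul_div_one_add_ofReal_mul b hBw)
  have hDr : 0 < 1 - B ^ 2 * r ^ 2 := by linarith [sq_mul_sq_lt_one (hr ▸ norm_nonneg z) hBr]
  rw [hp, ← ofReal_sub, add_re, one_re, re_ofReal_mul, div_le_iff₀ hDr]
  rw [div_le_iff₀ hDr] at hlow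
  nlinarith [mul_le_mul_of_nonneg_left hlow (by linarith : (0:ℝ) ≤ A - B)]

theorem stmt1 (A B : ℝ) (hB : -1 ≤ B) (hBA : B < A) (hA : A ≤ 1)
    (b : ℂ) (hb : b ≠ 0) (f : ℂ → ℂ)
    (hf : AnalyticOn ℂ f (ball 0 1))
    (hf0 : f 0 = 0) (hf'0 : deriv f 0 = 1)
    (hfne : ∀ z ∈ ball (0:ℂ) 1, z ≠ 0 → f z ≠ 0)
    (ω : ℂ → ℂ) (hω : AnalyticOn ℂ ω (ball 0 1))
    (hω0 : ω 0 = 0) (hωlt : ∀ z ∈ ball (0:ℂ) 1, ‖ω z‖ < 1)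
    (hmem : ∀ z ∈ ball (0:ℂ) 1, z ≠ 0 →
      1 + (1/b) * (z * deriv f z / f z - 1) = (1 + (A:ℂ) * ω z) / (1 + (B:ℂ) * ω z))
    (z : ℂ) (hz : z ∈ ball (0:ℂ) 1) (hz0 : z ≠ 0)
    (r : ℝ) (hr : ‖z‖ = r) :
    (1 - ‖b‖ * (A - B) * r - (B^2 + (A * B - B^2) * b.re) * r^2) / (1 - B^2 * r^2)
      ≤ (z * deriv f z / f z).re :=
  stmt1_general A B hB hBA hA b hb f ω hω hω0 hωlt hmem z hz hz0 r hr
end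

section
/- Suppose B = 0 (so 0 < A ≤ 1). If f belongs to S*(A,0,b), then for every z ∈ D with |z| = r one has r·e^{−|b|·A·r} ≤ |f(z)| ≤ r·e^{|b|·A·r}. (Theorem 3.1, case B = 0.) -/
/-!
Write `f z = z g(z)` with `g = dslope f 0`, so `g 0 = f' 0 = 1`, and `ω z = z ψ(z)` with
`ψ = dslope ω 0`, so `‖ψ‖ ≤ 1` by the Schwarz lemma. The defining relation
`z f'/f - 1 = b A ω` becomes the linear ODE `g' = b A ψ g` on the disc. Along the segment
from `0` to `z` the logarithmic derivative of `g` is therefore bounded by `‖b‖ A`, and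
Gronwall's inequality, applied to `g` and to `1/g`, gives
`e^{-‖b‖ A r} ≤ ‖g z‖ ≤ e^{‖b‖ A r}`.
-/

open Complex Metric Set Filter Topology

theorem norm_le_mul_exp_of_hasDerivAt_smul {E : Type*} [NormedAddCommGroup E] [NormedSpace ℂ E]
    {h : ℂ → E} {k : ℂ → ℂ} {R M : ℝ}
    (hh : ∀ w ∈ ball (0 : ℂ) R, HasDerivAt h (k w • h w) w)
    (hk : ∀ w ∈ ball (0 : ℂ) R, ‖k w‖ ≤ M) {z : ℂ} (hz : z ∈ ball (0 : ℂ) R) :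
    ‖h z‖ ≤ ‖h 0‖ * Real.exp (M * ‖z‖) := by
  have hseg : ∀ t ∈ Icc (0 : ℝ) 1, (t : ℂ) * z ∈ ball (0 : ℂ) R := by
    intro t ht
    rw [mem_ball_zero_iff] at hz ⊢
    rw [norm_mul, norm_real, Real.norm_of_nonneg ht.1]
    nlinarith [norm_nonneg z, ht.2]
  have hderiv : ∀ t ∈ Icc (0 : ℝ) 1,
      HasDerivAt (fun s : ℝ => h (s * z)) (z • k (t * z) • h (t * z)) t := fun t ht =>
    (hh _ (hseg t ht)).scomp t (by simpa using (hasDerivAt_id (t : ℂ)).comp_ofReal.mul_const z)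
  have hbound : ∀ t ∈ Ico (0 : ℝ) 1,
      ‖z • k (t * z) • h (t * z)‖ ≤ M * ‖z‖ * ‖h (t * z)‖ + 0 := fun t ht => by
    rw [norm_smul, norm_smul, add_zero]
    have := hk _ (hseg t (Ico_subset_Icc_self ht))
    nlinarith [norm_nonneg z, norm_nonneg (h (t * z)),
      mul_nonneg (norm_nonneg z) (norm_nonneg (h (t * z)))]
  simpa [gronwallBound_ε0] using norm_le_gronwallBound_of_norm_deriv_right_le
    (fun t ht => (hderiv t ht).continuousAt.continuousWithinAt)
    (fun t ht => (hderiv t (Ico_subset_Icc_self ht)).hasDerivWithinAt)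
    (by simp) hbound 1 (right_mem_Icc.2 zero_le_one)

theorem mul_exp_neg_le_norm_of_hasDerivAt_mul {h k : ℂ → ℂ} {R M : ℝ}
    (hh : ∀ w ∈ ball (0 : ℂ) R, HasDerivAt h (k w * h w) w)
    (hk : ∀ w ∈ ball (0 : ℂ) R, ‖k w‖ ≤ M) (hne : ∀ w ∈ ball (0 : ℂ) R, h w ≠ 0)
    {z : ℂ} (hz : z ∈ ball (0 : ℂ) R) :
    ‖h 0‖ * Real.exp (-(M * ‖z‖)) ≤ ‖h z‖ := by
  have hinv : ‖(h z)⁻¹‖ ≤ ‖(h 0)⁻¹‖ * Real.exp (M * ‖z‖) :=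
    norm_le_mul_exp_of_hasDerivAt_smul (h := fun w => (h w)⁻¹) (k := fun w => -k w)
      (fun w hw => ((hh w hw).inv (hne w hw)).congr_deriv (by
        rw [smul_eq_mul]
        field_simp [hne w hw]))
      (fun w hw => by simpa using hk w hw) hz
  have h0 : 0 < ‖h 0‖ := norm_pos_iff.2 (hne 0 (mem_ball_self (pos_of_mem_ball hz)))
  have hz0 : 0 < ‖h z‖ := norm_pos_iff.2 (hne z hz)
  rw [norm_inv, norm_inv, ← inv_inv (Real.exp _), ← mul_inv, inv_le_inv₀ hz0 (by positivity),
    ← Real.exp_neg] at hinv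
  exact hinv

theorem DifferentiableOn.hasDerivAt_of_hasDerivAt_of_ne {E : Type*} [NormedAddCommGroup E]
    [NormedSpace ℂ E] [CompleteSpace E] {f g : ℂ → E} {U : Set ℂ} {c : ℂ}
    (hf : DifferentiableOn ℂ f U) (hU : IsOpen U) (hc : c ∈ U)
    (hderiv : ∀ w ∈ U, w ≠ c → HasDerivAt f (g w) w) (hg : ContinuousAt g c) :
    HasDerivAt f (g c) c := by
  have hcU := hU.mem_nhds hc
  have hf' : ContinuousAt (_root_.deriv f) c :=
    ((hf.deriv hU).differentiableAt hcU).continuousAt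
  have heq : _root_.deriv f =ᶠ[𝓝[≠] c] g := by
    filter_upwards [self_mem_nhdsWithin, nhdsWithin_le_nhds hcU] with w hwc hwU
    exact (hderiv w hwU hwc).deriv
  have hc' : _root_.deriv f c = g c := tendsto_nhds_unique
    ((hf'.tendsto.mono_left nhdsWithin_le_nhds).congr' heq)
    (hg.tendsto.mono_left nhdsWithin_le_nhds)
  exact hc' ▸ (hf.differentiableAt hcU).hasDerivAt

theorem hasDerivAt_dslope_zero_of_ne {𝕜 : Type*} [NontriviallyNormedField 𝕜] {f : 𝕜 → 𝕜}
    {f' w : 𝕜} (hf : HasDerivAt f f' w) (hf0 : f 0 = 0) (hw : w ≠ 0) :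
    HasDerivAt (dslope f 0) ((w * f' - f w) / w ^ 2) w := by
  have heq : (fun u => f u / u) =ᶠ[𝓝 w] dslope f 0 := by
    filter_upwards [isOpen_ne.mem_nhds hw] with u hu
    rw [dslope_of_ne _ hu, slope_def_field, hf0, sub_zero, sub_zero]
  refine ((hf.div (hasDerivAt_id w) hw).congr_of_eventuallyEq heq.symm).congr_deriv ?_
  simp only [id, mul_one]
  ring

theorem hasDerivAt_dslope_of_mem_starlike {A : ℝ} {b : ℂ} (hb : b ≠ 0) {f ω : ℂ → ℂ}
    (hf : DifferentiableOn ℂ f (ball 0 1)) (hf0 : f 0 = 0)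
    (hfne : ∀ z ∈ ball (0 : ℂ) 1, z ≠ 0 → f z ≠ 0)
    (hω : DifferentiableOn ℂ ω (ball 0 1)) (hω0 : ω 0 = 0)
    (hmem : ∀ z ∈ ball (0 : ℂ) 1, z ≠ 0 →
      1 + (1 / b) * (z * deriv f z / f z - 1) = 1 + (A : ℂ) * ω z)
    {w : ℂ} (hw : w ∈ ball (0 : ℂ) 1) :
    HasDerivAt (dslope f 0) (b * A * dslope ω 0 w * dslope f 0 w) w := by
  have hne : ∀ u ∈ ball (0 : ℂ) 1, u ≠ 0 →
      HasDerivAt (dslope f 0) (b * A * dslope ω 0 u * dslope f 0 u) u := by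
    intro u hu hu0
    have hkey : u * deriv f u - f u = b * A * ω u * f u := by
      have h := hmem u hu hu0
      field_simp [hfne u hu hu0] at h
      linear_combination h
    refine (hasDerivAt_dslope_zero_of_ne
      (hf.differentiableAt (isOpen_ball.mem_nhds hu)).hasDerivAt hf0 hu0).congr_deriv ?_
    rw [dslope_of_ne _ hu0, dslope_of_ne _ hu0, slope_def_field, slope_def_field, hkey, hf0, hω0]
    field_simp
    ring
  rcases eq_or_ne w 0 with rfl | hw0
  · have hψ : DifferentiableOn ℂ (dslope ω 0) (ball 0 1) :=
      (differentiableOn_dslope (ball_mem_nhds 0 one_pos)).2 hω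
    have hg : DifferentiableOn ℂ (dslope f 0) (ball 0 1) :=
      (differentiableOn_dslope (ball_mem_nhds 0 one_pos)).2 hf
    refine hg.hasDerivAt_of_hasDerivAt_of_ne isOpen_ball hw hne ?_
    have hU := isOpen_ball.mem_nhds hw
    exact (continuousAt_const.mul (hψ.differentiableAt hU).continuousAt).mul
      (hg.differentiableAt hU).continuousAt
  · exact hne w hw hw0

theorem stmt5_general (A : ℝ) (hA0 : 0 < A)
    (b : ℂ) (hb : b ≠ 0) (f : ℂ → ℂ)
    (hf : AnalyticOn ℂ f (ball 0 1))
    (hf0 : f 0 = 0) (hf'0 : deriv f 0 = 1)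
    (hfne : ∀ z ∈ ball (0:ℂ) 1, z ≠ 0 → f z ≠ 0)
    (ω : ℂ → ℂ) (hω : AnalyticOn ℂ ω (ball 0 1))
    (hω0 : ω 0 = 0) (hωlt : ∀ z ∈ ball (0:ℂ) 1, ‖ω z‖ < 1)
    (hmem : ∀ z ∈ ball (0:ℂ) 1, z ≠ 0 →
      1 + (1/b) * (z * deriv f z / f z - 1) = 1 + (A:ℂ) * ω z)
    (z : ℂ) (hz : z ∈ ball (0:ℂ) 1) (r : ℝ) (hr : ‖z‖ = r) :
    r * Real.exp (-(‖b‖ * A * r)) ≤ ‖f z‖ ∧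
      ‖f z‖ ≤ r * Real.exp (‖b‖ * A * r) := by
  have hg : ∀ w ∈ ball (0 : ℂ) 1,
      HasDerivAt (dslope f 0) (b * A * dslope ω 0 w * dslope f 0 w) w :=
    fun w hw => hasDerivAt_dslope_of_mem_starlike hb hf.differentiableOn hf0 hfne
      hω.differentiableOn hω0 hmem hw
  have hψ : ∀ w ∈ ball (0 : ℂ) 1, ‖dslope ω 0 w‖ ≤ 1 := fun w hw => by
    simpa using norm_dslope_le_div_of_mapsTo_ball hω.differentiableOn
      (fun u hu => by simpa [hω0] using (hωlt u hu).le) hw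
  have hk : ∀ w ∈ ball (0 : ℂ) 1, ‖b * A * dslope ω 0 w‖ ≤ ‖b‖ * A := fun w hw => by
    rw [norm_mul, norm_mul, norm_real, Real.norm_of_nonneg hA0.le]
    exact mul_le_of_le_one_right (by positivity) (hψ w hw)
  have hfg : ∀ w, f w = w * dslope f 0 w := fun w => by
    simpa [hf0] using (sub_smul_dslope f 0 w).symm
  have hgne : ∀ w ∈ ball (0 : ℂ) 1, dslope f 0 w ≠ 0 := fun w hw => by
    rcases eq_or_ne w 0 with rfl | hw0
    · simp [hf'0]
    · exact right_ne_zero_of_mul (hfg w ▸ hfne w hw hw0)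
  have upper :=
    norm_le_mul_exp_of_hasDerivAt_smul (k := fun w => b * A * dslope ω 0 w) hg hk hz
  have lower := mul_exp_neg_le_norm_of_hasDerivAt_mul hg hk hgne hz
  simp only [dslope_same, hf'0, norm_one, one_mul, hr] at upper lower
  have hr0 : 0 ≤ r := hr ▸ norm_nonneg z
  rw [hfg, norm_mul, hr]
  exact ⟨by gcongr, by gcongr⟩

theorem stmt5 (A : ℝ) (hA0 : 0 < A) (hA : A ≤ 1)
    (b : ℂ) (hb : b ≠ 0) (f : ℂ → ℂ)
    (hf : AnalyticOn ℂ f (ball 0 1))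
    (hf0 : f 0 = 0) (hf'0 : deriv f 0 = 1)
    (hfne : ∀ z ∈ ball (0:ℂ) 1, z ≠ 0 → f z ≠ 0)
    (ω : ℂ → ℂ) (hω : AnalyticOn ℂ ω (ball 0 1))
    (hω0 : ω 0 = 0) (hωlt : ∀ z ∈ ball (0:ℂ) 1, ‖ω z‖ < 1)
    (hmem : ∀ z ∈ ball (0:ℂ) 1, z ≠ 0 →
      1 + (1/b) * (z * deriv f z / f z - 1) = 1 + (A:ℂ) * ω z)
    (z : ℂ) (hz : z ∈ ball (0:ℂ) 1) (r : ℝ) (hr : ‖z‖ = r) :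
    r * Real.exp (-(‖b‖ * A * r)) ≤ ‖f z‖ ∧
      ‖f z‖ ≤ r * Real.exp (‖b‖ * A * r) :=
  stmt5_general A hA0 b hb f hf hf0 hf'0 hfne ω hω hω0 hωlt hmem z hz r hr
end

section
/- Suppose B ≠ 0. The function f*(z) = z·exp( (b·(A − B)/B)·Log(1 + B·z) ), where Log denotes the principal branch of the complex logarithm (well defined since Re(1 + B·z) > 0 for z ∈ D), belongs to the class S*(A,B,b); indeed it satisfies 1 + (1/b)·(z·f*′(z)/f*(z) − 1) = (1 + A·z)/(1 + B·z) for all z ∈ D \ {0}. (The extremal function of Theorems 2.1 and 3.1, case B ≠ 0.) -/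
open Complex Metric Set

noncomputable def fstar (A B : ℝ) (b : ℂ) : ℂ → ℂ :=
  fun z => z * Complex.exp ((b * ((A:ℂ) - (B:ℂ)) / (B:ℂ)) * Complex.log (1 + (B:ℂ) * z))

/-! Writing `f*(z) = z · exp(c · Log(1 + Bz))` with `c = b(A − B)/B`, the logarithmic derivative is
`z f*'(z) / f*(z) = 1 + cBz / (1 + Bz) = 1 + b(A − B)z / (1 + Bz)`, which is the claimed identity.
Since `|Bz| < 1` on the disc, `1 + Bz` stays in the slit plane, where `Log` is holomorphic. -/

lemma one_add_ofReal_mul_mem_slitPlane {B : ℝ} (hB : |B| ≤ 1) {z : ℂ} (hz : z ∈ ball (0 : ℂ) 1) :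
    1 + (B : ℂ) * z ∈ slitPlane := by
  refine mem_slitPlane_of_norm_lt_one ?_
  rw [mem_ball_zero_iff] at hz
  calc ‖(B : ℂ) * z‖ = |B| * ‖z‖ := by rw [norm_mul, norm_real, Real.norm_eq_abs]
    _ ≤ ‖z‖ := mul_le_of_le_one_left (norm_nonneg z) hB
    _ < 1 := hz

lemma hasDerivAt_mul_cexp_mul_log_one_add_mul {c B z : ℂ} (hz : 1 + B * z ∈ slitPlane) :
    HasDerivAt (fun w => w * exp (c * log (1 + B * w)))
      (exp (c * log (1 + B * z)) * (1 + c * B * z / (1 + B * z))) z := by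
  have hlin : HasDerivAt (fun w => 1 + B * w) B z := by
    simpa using ((hasDerivAt_id z).const_mul B).const_add 1
  have hexp := (((hasDerivAt_log hz).comp z hlin).const_mul c).cexp
  refine ((hasDerivAt_id' z).mul hexp).congr_deriv ?_
  simp only [Function.comp_apply]
  field_simp [slitPlane_ne_zero hz]

lemma mul_deriv_div_self_eq {c B z : ℂ} (hz : 1 + B * z ∈ slitPlane) (hz0 : z ≠ 0) :
    z * deriv (fun w => w * exp (c * log (1 + B * w))) z / (z * exp (c * log (1 + B * z)))
      = 1 + c * B * z / (1 + B * z) := by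
  rw [(hasDerivAt_mul_cexp_mul_log_one_add_mul hz).deriv]
  field_simp [exp_ne_zero]

theorem stmt6 (A B : ℝ) (hB : -1 ≤ B) (hBA : B < A) (hA : A ≤ 1)
    (b : ℂ) (hb : b ≠ 0) (hB0 : B ≠ 0) :
    AnalyticOn ℂ (fstar A B b) (ball 0 1) ∧
    fstar A B b 0 = 0 ∧
    deriv (fstar A B b) 0 = 1 ∧
    (∀ z ∈ ball (0:ℂ) 1, z ≠ 0 → fstar A B b z ≠ 0) ∧
    (∀ z ∈ ball (0:ℂ) 1, z ≠ 0 →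
      1 + (1/b) * (z * deriv (fstar A B b) z / fstar A B b z - 1)
        = (1 + (A:ℂ) * z) / (1 + (B:ℂ) * z)) := by
  have hslit : ∀ z ∈ ball (0 : ℂ) 1, 1 + (B : ℂ) * z ∈ slitPlane :=
    fun z => one_add_ofReal_mul_mem_slitPlane (abs_le.2 ⟨hB, by linarith⟩)
  have hderiv : ∀ z ∈ ball (0 : ℂ) 1, HasDerivAt (fstar A B b) _ z :=
    fun z hz => hasDerivAt_mul_cexp_mul_log_one_add_mul (hslit z hz)
  refine ⟨?_, by simp [fstar], ?_, fun z _ hz0 => mul_ne_zero hz0 (exp_ne_zero _), ?_⟩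
  · refine (DifferentiableOn.analyticOnNhd (fun z hz => ?_) isOpen_ball).analyticOn
    exact (hderiv z hz).differentiableAt.differentiableWithinAt
  · simpa using (hderiv 0 (mem_ball_self one_pos)).deriv
  · intro z hz hz0
    unfold fstar
    rw [mul_deriv_div_self_eq (hslit z hz) hz0]
    have hB0' : (B : ℂ) ≠ 0 := ofReal_ne_zero.2 hB0
    field_simp [slitPlane_ne_zero (hslit z hz)]
    ring
end

section
/- If f belongs to S*(1,−1,b) (the class of starlike functions of complex order b), then Re( z·f′(z)/f(z) ) > 0 for every z ∈ D \ {0} with |z| < 1/( |b| + √( |b|² − 2·Re b + 1 ) ). (Theorem 2.1, special case A = 1, B = −1; the radius of starlikeness of starlike functions of complex order, due to Nasr and Aouf.) -/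
/-!
Writing `w = ω z`, the defining relation gives `z f'(z) / f(z) = 1 + 2 b w / (1 - w)`, and the
Schwarz lemma gives `‖w‖ ≤ ‖z‖`. The radicand is `‖b - 1‖²`, and
`Re ((1 + (2b - 1) w) · conj (1 - w)) = 1 + 2 Re ((b - 1) w) - (‖b‖² - ‖b - 1‖²) ‖w‖²`
is at least `(1 - ‖b - 1‖ ‖w‖)² - ‖b‖² ‖w‖²`, which is positive once
`‖w‖ (‖b‖ + ‖b - 1‖) < 1`.
-/

open Complex Metric ComplexConjugate

namespace Complex

lemma sqrt_norm_sq_sub_two_mul_re_add_one (b : ℂ) :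
    Real.sqrt (‖b‖ ^ 2 - 2 * b.re + 1) = ‖b - 1‖ := by
  rw [← Real.sqrt_sq (norm_nonneg (b - 1)), Complex.sq_norm, Complex.sq_norm,
    normSq_apply, normSq_apply]
  congr 1
  simp only [sub_re, sub_im, one_re, one_im]
  ring

lemma re_mul_conj_one_sub_eq (b w : ℂ) :
    ((1 + (2 * b - 1) * w) * conj (1 - w)).re
      = 1 + 2 * ((b - 1) * w).re - (‖b‖ ^ 2 - ‖b - 1‖ ^ 2) * ‖w‖ ^ 2 := by
  simp only [Complex.sq_norm, normSq_apply, mul_re, mul_im, add_re, add_im, sub_re, sub_im,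
    conj_re, conj_im, one_re, one_im, re_ofNat, im_ofNat]
  ring

lemma re_one_add_two_mul_div_one_sub_pos {b w : ℂ} (h : ‖w‖ * (‖b‖ + ‖b - 1‖) < 1) :
    0 < (1 + 2 * b * w / (1 - w)).re := by
  have hb : 1 ≤ ‖b‖ + ‖b - 1‖ := by simpa using norm_sub_le b (b - 1)
  have hw : 1 - w ≠ 0 := by
    rw [sub_ne_zero]
    rintro rfl
    simp only [norm_one, one_mul] at h
    linarith
  have hrepr : 1 + 2 * b * w / (1 - w)
      = (1 + (2 * b - 1) * w) * conj (1 - w) / (normSq (1 - w) : ℂ) := by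
    rw [← mul_conj, mul_div_mul_right _ _ ((map_ne_zero _).mpr hw)]
    field_simp
    ring
  rw [hrepr, div_ofReal_re, re_mul_conj_one_sub_eq]
  refine div_pos ?_ (normSq_pos.mpr hw)
  have hre : -(‖b - 1‖ * ‖w‖) ≤ ((b - 1) * w).re := by
    simpa using neg_le_of_abs_le (abs_re_le_norm ((b - 1) * w))
  have hfactor : 0 < (1 - ‖b - 1‖ * ‖w‖ - ‖b‖ * ‖w‖) * (1 - ‖b - 1‖ * ‖w‖ + ‖b‖ * ‖w‖) := by
    apply mul_pos <;> nlinarith [norm_nonneg b, norm_nonneg w]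
  nlinarith

lemma eq_one_add_two_mul_div_one_sub {b p w : ℂ} (hb : b ≠ 0) (hw : w ≠ 1)
    (h : 1 + (1 / b) * (p - 1) = (1 + w) / (1 - w)) :
    p = 1 + 2 * b * w / (1 - w) := by
  have hw' : 1 - w ≠ 0 := sub_ne_zero.mpr hw.symm
  field_simp at h ⊢
  linear_combination h

end Complex

theorem stmt10_general 
    (b : ℂ) (hb : b ≠ 0) (f : ℂ → ℂ)
    (ω : ℂ → ℂ) (hω : AnalyticOn ℂ ω (ball 0 1))
    (hω0 : ω 0 = 0) (hωlt : ∀ z ∈ ball (0:ℂ) 1, ‖ω z‖ < 1)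
    (hmem : ∀ z ∈ ball (0:ℂ) 1, z ≠ 0 →
      1 + (1/b) * (z * deriv f z / f z - 1) = (1 + ω z) / (1 - ω z))
    (z : ℂ) (hz : z ∈ ball (0:ℂ) 1) (hz0 : z ≠ 0)
    (hzr : ‖z‖ <
      1 / (‖b‖ + Real.sqrt (‖b‖^2 - 2 * b.re + 1))) :
    0 < (z * deriv f z / f z).re := by
  have hω1 : ω z ≠ 1 := fun h => by simpa [h] using hωlt z hz
  have hschwarz : ‖ω z‖ ≤ ‖z‖ :=
    norm_le_norm_of_mapsTo_ball hω.differentiableOn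
      (fun x hx => mem_closedBall_zero_iff.mpr (hωlt x hx).le) hω0 (mem_ball_zero_iff.mp hz)
  rw [sqrt_norm_sq_sub_two_mul_re_add_one, lt_div_iff₀ (by positivity)] at hzr
  rw [eq_one_add_two_mul_div_one_sub hb hω1 (hmem z hz hz0)]
  exact re_one_add_two_mul_div_one_sub_pos (lt_of_le_of_lt (by gcongr) hzr)

theorem stmt10 
    (b : ℂ) (hb : b ≠ 0) (f : ℂ → ℂ)
    (hf : AnalyticOn ℂ f (ball 0 1))
    (hf0 : f 0 = 0) (hf'0 : deriv f 0 = 1)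
    (hfne : ∀ z ∈ ball (0:ℂ) 1, z ≠ 0 → f z ≠ 0)
    (ω : ℂ → ℂ) (hω : AnalyticOn ℂ ω (ball 0 1))
    (hω0 : ω 0 = 0) (hωlt : ∀ z ∈ ball (0:ℂ) 1, ‖ω z‖ < 1)
    (hmem : ∀ z ∈ ball (0:ℂ) 1, z ≠ 0 →
      1 + (1/b) * (z * deriv f z / f z - 1) = (1 + ω z) / (1 - ω z))
    (z : ℂ) (hz : z ∈ ball (0:ℂ) 1) (hz0 : z ≠ 0)
    (hzr : ‖z‖ <
      1 / (‖b‖ + Real.sqrt (‖b‖^2 - 2 * b.re + 1))) :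
    0 < (z * deriv f z / f z).re :=
  stmt10_general b hb f ω hω hω0 hωlt hmem z hz hz0 hzr
end

section
/- Let 0 ≤ β < 1 and assume (1 − β)²·|b|² + 1 − 2·(1 − β)·Re b ≥ 0. If f belongs to S*(1 − 2β, −1, b), then Re( z·f′(z)/f(z) ) > 0 for every z ∈ D \ {0} with |z| < 1/( (1 − β)·|b| + √( (1 − β)²·|b|² + 1 − 2·(1 − β)·Re b ) ). (Theorem 2.1, special case A = 1 − 2β, B = −1, with the specialization of the general radius formula carried out correctly.) -/
/-!
Write `p = z f'(z)/f(z)`, `w = ω(z)` and `u = (1 - β) b w`. The subordination gives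
`p (1 - w) = 1 - w + 2u`, and taking real parts against `conj (1 - w)` yields
`Re p · |1 - w|² = |1 - w + u|² - |u|²`. Since `1 - w + u = 1 - c w` with `c = 1 - (1 - β) b`,
and `|c|² = (1 - β)²|b|² + 1 - 2(1 - β) Re b`, Schwarz's lemma `|w| ≤ |z|` and the radius bound give
`|1 - c w| ≥ 1 - |c||z| > (1 - β)|b||z| ≥ |u|`, so `Re p > 0`.
-/

open Complex Metric Set

namespace Complex

theorem mul_one_add_mul_eq_of_subordinate {A B b p w : ℂ} (hb : b ≠ 0) (hw : 1 + B * w ≠ 0)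
    (h : 1 + 1 / b * (p - 1) = (1 + A * w) / (1 + B * w)) :
    p * (1 + B * w) = 1 + B * w + b * (A - B) * w := by
  rw [eq_div_iff hw] at h
  field_simp at h
  linear_combination h

theorem re_mul_normSq_one_sub_eq {p w u : ℂ} (h : p * (1 - w) = 1 - w + 2 * u) :
    p.re * normSq (1 - w) = normSq (1 - w + u) - normSq u := by
  have hre : p.re * normSq (1 - w) = (p * (1 - w) * starRingEnd ℂ (1 - w)).re := by
    rw [mul_assoc, mul_conj, re_mul_ofReal]
  rw [hre, h]
  simp only [normSq_apply, mul_re, mul_im, add_re, add_im, sub_re, sub_im, one_re, one_im,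
    conj_re, conj_im, re_ofNat, im_ofNat]
  ring

theorem re_pos_of_mul_one_sub_eq {p w u : ℂ} (h : p * (1 - w) = 1 - w + 2 * u)
    (hu : ‖u‖ < ‖1 - w + u‖) : 0 < p.re := by
  have hpos : 0 < p.re * normSq (1 - w) := by
    rw [re_mul_normSq_one_sub_eq h, ← Complex.sq_norm, ← Complex.sq_norm, sub_pos]
    exact pow_lt_pow_left₀ hu (norm_nonneg u) two_ne_zero
  exact pos_of_mul_pos_left hpos (normSq_nonneg _)

theorem norm_mul_lt_norm_one_sub_mul {a c w : ℂ} (hw : ‖w‖ < 1 / (‖a‖ + ‖c‖)) :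
    ‖a * w‖ < ‖1 - c * w‖ := by
  have hd : 0 < ‖a‖ + ‖c‖ := by
    by_contra! hd
    linarith [one_div_nonpos.2 hd, norm_nonneg w]
  have hwd : ‖w‖ * (‖a‖ + ‖c‖) < 1 := (lt_div_iff₀ hd).1 hw
  calc ‖a * w‖ = ‖a‖ * ‖w‖ := norm_mul a w
    _ < 1 - ‖c‖ * ‖w‖ := by linarith
    _ = ‖(1 : ℂ)‖ - ‖c * w‖ := by rw [norm_one, norm_mul]
    _ ≤ ‖1 - c * w‖ := norm_sub_norm_le 1 (c * w)

theorem sq_norm_one_sub_ofReal_mul (t : ℝ) (b : ℂ) :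
    ‖1 - t * b‖ ^ 2 = t ^ 2 * ‖b‖ ^ 2 + 1 - 2 * t * b.re := by
  simp only [Complex.sq_norm, normSq_apply, sub_re, sub_im, one_re, one_im, re_ofReal_mul,
    im_ofReal_mul]
  ring

end Complex

theorem stmt12_general (β : ℝ) (hβ1 : β < 1)
    (b : ℂ) (hb : b ≠ 0) (f : ℂ → ℂ)
    (ω : ℂ → ℂ) (hω : AnalyticOn ℂ ω (ball 0 1))
    (hω0 : ω 0 = 0) (hωlt : ∀ z ∈ ball (0:ℂ) 1, ‖ω z‖ < 1)
    (hmem : ∀ z ∈ ball (0:ℂ) 1, z ≠ 0 →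
      1 + (1/b) * (z * deriv f z / f z - 1) = (1 + ((1:ℂ) - 2*(β:ℂ)) * ω z) / (1 - ω z))
    (z : ℂ) (hz : z ∈ ball (0:ℂ) 1) (hz0 : z ≠ 0)
    (hzr : ‖z‖ <
      1 / ((1 - β) * ‖b‖ +
        Real.sqrt ((1 - β)^2 * ‖b‖^2 + 1 - 2 * (1 - β) * b.re))) :
    0 < (z * deriv f z / f z).re := by
  have hschwarz : ‖ω z‖ ≤ ‖z‖ := norm_le_norm_of_mapsTo_ball hω.differentiableOn
    (fun x hx => mem_closedBall_zero_iff.2 (hωlt x hx).le) hω0 (mem_ball_zero_iff.1 hz)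
  have hw : 1 + -1 * ω z ≠ 0 := by
    rw [neg_one_mul, ← sub_eq_add_neg, sub_ne_zero]
    exact fun h => by simpa [← h] using hωlt z hz
  have hsub := mul_one_add_mul_eq_of_subordinate hb hw
    (by simpa only [neg_one_mul, ← sub_eq_add_neg] using hmem z hz hz0)
  refine re_pos_of_mul_one_sub_eq (w := ω z) (u := (1 - β : ℝ) * b * ω z)
    (by push_cast; linear_combination hsub) ?_
  rw [show 1 - ω z + (1 - β : ℝ) * b * ω z = 1 - (1 - (1 - β : ℝ) * b) * ω z by ring]
  refine norm_mul_lt_norm_one_sub_mul (hschwarz.trans_lt ?_)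
  rwa [norm_mul, norm_real, Real.norm_of_nonneg (by linarith),
    ← Real.sqrt_sq (norm_nonneg (1 - ((1 - β : ℝ) : ℂ) * b)), sq_norm_one_sub_ofReal_mul]

theorem stmt12 (β : ℝ) (hβ0 : 0 ≤ β) (hβ1 : β < 1)
    (b : ℂ) (hb : b ≠ 0) (f : ℂ → ℂ)
    (hf : AnalyticOn ℂ f (ball 0 1))
    (hf0 : f 0 = 0) (hf'0 : deriv f 0 = 1)
    (hfne : ∀ z ∈ ball (0:ℂ) 1, z ≠ 0 → f z ≠ 0)
    (ω : ℂ → ℂ) (hω : AnalyticOn ℂ ω (ball 0 1))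
    (hω0 : ω 0 = 0) (hωlt : ∀ z ∈ ball (0:ℂ) 1, ‖ω z‖ < 1)
    (hmem : ∀ z ∈ ball (0:ℂ) 1, z ≠ 0 →
      1 + (1/b) * (z * deriv f z / f z - 1) = (1 + ((1:ℂ) - 2*(β:ℂ)) * ω z) / (1 - ω z))
    (hdisc : 0 ≤ (1 - β)^2 * ‖b‖^2 + 1 - 2 * (1 - β) * b.re)
    (z : ℂ) (hz : z ∈ ball (0:ℂ) 1) (hz0 : z ≠ 0)
    (hzr : ‖z‖ <
      1 / ((1 - β) * ‖b‖ +
        Real.sqrt ((1 - β)^2 * ‖b‖^2 + 1 - 2 * (1 - β) * b.re))) :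
    0 < (z * deriv f z / f z).re :=
  stmt12_general β hβ1 b hb f ω hω hω0 hωlt hmem z hz hz0 hzr
end

section
/- If f belongs to S*(1,0,b), then Re( z·f′(z)/f(z) ) > 0 for every z ∈ D \ {0} with |z| < 1/|b|. (Theorem 2.1, special case A = 1, B = 0.) -/
open Complex Metric Set

/-
Unwinding the subordination, z f'(z)/f(z) = 1 + b ω(z). By the Schwarz lemma |ω(z)| ≤ |z|, so
|b ω(z)| < 1 when |z| < 1/|b|, and a point of the open unit disc centred at 1 has positive real part.
-/

theorem eq_one_add_mul_of_one_add_one_div_mul_sub_one_eq {K : Type*} [Field K] {b p w : K}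
    (hb : b ≠ 0) (h : 1 + (1 / b) * (p - 1) = 1 + w) : p = 1 + b * w := by
  field_simp at h
  linear_combination h

theorem Complex.one_add_re_pos_of_norm_lt_one {w : ℂ} (hw : ‖w‖ < 1) : 0 < (1 + w).re := by
  rw [add_re, one_re]
  linarith [neg_abs_le w.re, abs_re_le_norm w]

theorem norm_mul_lt_one_of_norm_le_of_lt_one_div {b w z : ℂ} (hw : ‖w‖ ≤ ‖z‖)
    (hz : ‖z‖ < 1 / ‖b‖) : ‖b * w‖ < 1 := by
  have hb : 0 < ‖b‖ := by
    by_contra! h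
    rw [le_antisymm h (norm_nonneg b), div_zero] at hz
    exact (norm_nonneg z).not_gt hz
  calc ‖b * w‖ = ‖b‖ * ‖w‖ := norm_mul b w
    _ ≤ ‖b‖ * ‖z‖ := by gcongr
    _ < 1 := (lt_div_iff₀' hb).mp hz

theorem stmt13_general 
    (b : ℂ) (hb : b ≠ 0) (f : ℂ → ℂ)
    (ω : ℂ → ℂ) (hω : AnalyticOn ℂ ω (ball 0 1))
    (hω0 : ω 0 = 0) (hωlt : ∀ z ∈ ball (0:ℂ) 1, ‖ω z‖ < 1)
    (hmem : ∀ z ∈ ball (0:ℂ) 1, z ≠ 0 →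
      1 + (1/b) * (z * deriv f z / f z - 1) = 1 + ω z)
    (z : ℂ) (hz : z ∈ ball (0:ℂ) 1) (hz0 : z ≠ 0)
    (hzr : ‖z‖ < 1 / ‖b‖) :
    0 < (z * deriv f z / f z).re := by
  have hschwarz : ‖ω z‖ ≤ ‖z‖ :=
    norm_le_norm_of_mapsTo_ball hω.differentiableOn
      (fun w hw ↦ mem_closedBall_zero_iff.mpr (hωlt w hw).le) hω0 (mem_ball_zero_iff.mp hz)
  rw [eq_one_add_mul_of_one_add_one_div_mul_sub_one_eq hb (hmem z hz hz0)]
  exact one_add_re_pos_of_norm_lt_one (norm_mul_lt_one_of_norm_le_of_lt_one_div hschwarz hzr)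

theorem stmt13 
    (b : ℂ) (hb : b ≠ 0) (f : ℂ → ℂ)
    (hf : AnalyticOn ℂ f (ball 0 1))
    (hf0 : f 0 = 0) (hf'0 : deriv f 0 = 1)
    (hfne : ∀ z ∈ ball (0:ℂ) 1, z ≠ 0 → f z ≠ 0)
    (ω : ℂ → ℂ) (hω : AnalyticOn ℂ ω (ball 0 1))
    (hω0 : ω 0 = 0) (hωlt : ∀ z ∈ ball (0:ℂ) 1, ‖ω z‖ < 1)
    (hmem : ∀ z ∈ ball (0:ℂ) 1, z ≠ 0 →
      1 + (1/b) * (z * deriv f z / f z - 1) = 1 + ω z)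
    (z : ℂ) (hz : z ∈ ball (0:ℂ) 1) (hz0 : z ≠ 0)
    (hzr : ‖z‖ < 1 / ‖b‖) :
    0 < (z * deriv f z / f z).re :=
  stmt13_general b hb f ω hω hω0 hωlt hmem z hz hz0 hzr
end
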